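/- Let M be a valuated matroid on finite set E with values in ℝ ∪ {∞} and w ∈ ℝ^E. Every circuit of the initial matroid in_w(M) is of the form in_w(H) for some valuated circuit H of M, where in_w(H) = { e : H_e + w_e minimal }. -/

import Mathlib

/-- A valuated matroid of rank `r` on a finite ground set `E`, with values in `ℝ ∪ {∞}`:
a basis valuation function `p` on `binom(E,r)` (encoded as a function on all finsets which
is `∞` away from `r`-sets), not identically `∞`, satisfying the valuated basis exchange
axiom. -/
structure ValuatedMatroid (E : Type*) [DecidableEq E] [Fintype E] (r : ℕ) where
  p : Finset E → WithTop ℝ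
  card_of_ne_top : ∀ B : Finset E, p B ≠ ⊤ → B.card = r
  exists_ne_top : ∃ B : Finset E, p B ≠ ⊤
  exchange : ∀ A B : Finset E, A.card = r → B.card = r → ∀ a ∈ A \ B,
    ∃ b ∈ B \ A,
      p (insert b (A.erase a)) + p (insert a (B.erase b)) ≤ p A + p B

namespace ValuatedMatroid

variable {E : Type*} [DecidableEq E] [Fintype E] {r : ℕ}

/-- The shifted valuation `p_w(B) = p(B) − ∑_{e ∈ B} w_e`. -/
noncomputable def pw (M : ValuatedMatroid E r) (w : E → ℝ) (B : Finset E) : WithTop ℝ :=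
  M.p B + ((-(∑ e ∈ B, w e) : ℝ) : WithTop ℝ)

/-- The minimum of `p_w` over all subsets of `E` (equivalently over all `r`-subsets,
since `p` is `∞` elsewhere). -/
noncomputable def minVal (M : ValuatedMatroid E r) (w : E → ℝ) : WithTop ℝ :=
  (Finset.univ : Finset E).powerset.inf (M.pw w)

/-- `B` is a basis of the initial matroid `in_w(M)`: an `r`-subset minimizing `p_w`. -/
def IsInitBasis (M : ValuatedMatroid E r) (w : E → ℝ) (B : Finset E) : Prop :=
  B.card = r ∧ M.pw w B = M.minVal w

end ValuatedMatroid

namespace ValuatedMatroid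

variable {E : Type*} [DecidableEq E] [Fintype E] {r : ℕ}

/-- The fundamental circuit `H(B, e)` of `e` over a basis `B` of the underlying matroid:
`H(B,e)_{e'} = p(B ∪ e − e') − p(B)`. -/
noncomputable def fundCircuit (M : ValuatedMatroid E r) (B : Finset E) (e : E) :
    E → WithTop ℝ := fun e' =>
  M.p ((insert e B).erase e') + ((-(WithTop.untopD 0 (M.p B)) : ℝ) : WithTop ℝ)

/-- A valuated circuit of `M`: a tropical scaling `λ ⊙ H(B, e)` of a fundamental
circuit over a basis `B` of the underlying matroid (`p(B) ≠ ∞`). -/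
noncomputable def IsValuatedCircuit (M : ValuatedMatroid E r) (H : E → WithTop ℝ) : Prop :=
  ∃ (B : Finset E) (e : E) (lam : ℝ), M.p B ≠ ⊤ ∧ e ∉ B ∧
    ∀ e', H e' = (lam : WithTop ℝ) + M.fundCircuit B e e'

/-- `in_w(H)`: the set of elements at which `H_e + w_e` is minimal. -/
def initSet (H : E → WithTop ℝ) (w : E → ℝ) : Set E :=
  {e | ∀ e', H e + (w e : WithTop ℝ) ≤ H e' + (w e' : WithTop ℝ)}

end ValuatedMatroid

/-! Pick `e ∈ C`. By minimality `C - e` lies in an initial basis `B`, and `e ∉ B` since `C` is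
dependent. Up to an additive constant, `H(B,e)_x + w_x` equals `p_w(B + e - x)`, so
`in_w(H(B,e))` is the set of `x` for which `B + e - x` is an initial basis. This set contains
`C` by the valuated exchange axiom applied to `B` and an initial basis containing `C - x`, and
it is contained in `C` because `C ⊆ B + e - x` for every `x ∉ C`. -/

namespace ValuatedMatroid

lemma sum_exchange {E : Type*} [DecidableEq E] {A B : Finset E} (w : E → ℝ) {a b : E}
    (ha : a ∈ A) (haB : a ∉ B) (hb : b ∈ B) (hbA : b ∉ A) :
    ∑ x ∈ insert b (A.erase a), w x + ∑ x ∈ insert a (B.erase b), w x =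
      ∑ x ∈ A, w x + ∑ x ∈ B, w x := by
  rw [Finset.sum_insert (by simp [hbA]), Finset.sum_insert (by simp [haB]),
    ← Finset.sum_erase_add A w ha, ← Finset.sum_erase_add B w hb]
  ring

lemma initSet_eq_of_add_eq {E : Type*} {w : E → ℝ} {H g : E → WithTop ℝ} (c : ℝ)
    (h : ∀ x, H x + w x = g x + c) :
    initSet H w = {x | ∀ y, g x ≤ g y} := by
  ext x
  simp only [initSet, Set.mem_ofPred_eq, h, WithTop.add_le_add_iff_right WithTop.coe_ne_top]

variable {E : Type*} [DecidableEq E] [Fintype E] {r : ℕ}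
  {M : ValuatedMatroid E r} {w : E → ℝ} {A B C : Finset E} {a e x : E}

def IsInitIndep (M : ValuatedMatroid E r) (w : E → ℝ) (I : Finset E) : Prop :=
  ∃ B : Finset E, M.IsInitBasis w B ∧ I ⊆ B

lemma minVal_le (M : ValuatedMatroid E r) (w : E → ℝ) (B : Finset E) :
    M.minVal w ≤ M.pw w B :=
  Finset.inf_le (Finset.mem_powerset.2 (Finset.subset_univ B))

lemma pw_ne_top_iff : M.pw w B ≠ ⊤ ↔ M.p B ≠ ⊤ := by
  simp [pw]

lemma minVal_ne_top (M : ValuatedMatroid E r) (w : E → ℝ) : M.minVal w ≠ ⊤ := by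
  obtain ⟨B, hB⟩ := M.exists_ne_top
  exact ne_top_of_le_ne_top (pw_ne_top_iff.2 hB) (M.minVal_le w B)

lemma IsInitBasis.p_ne_top (hB : M.IsInitBasis w B) : M.p B ≠ ⊤ :=
  pw_ne_top_iff.1 (hB.2 ▸ M.minVal_ne_top w)

lemma isInitBasis_of_pw_le (h : M.pw w B ≤ M.minVal w) : M.IsInitBasis w B := by
  have heq : M.pw w B = M.minVal w := le_antisymm h (M.minVal_le w B)
  exact ⟨M.card_of_ne_top B (pw_ne_top_iff.1 (heq ▸ M.minVal_ne_top w)), heq⟩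

lemma exists_isInitBasis (M : ValuatedMatroid E r) (w : E → ℝ) :
    ∃ B : Finset E, M.IsInitBasis w B := by
  obtain ⟨B, _, hB⟩ := Finset.exists_mem_eq_inf (Finset.univ : Finset E).powerset
    ⟨∅, Finset.mem_powerset.2 (Finset.empty_subset _)⟩ (M.pw w)
  exact ⟨B, isInitBasis_of_pw_le hB.ge⟩

lemma pw_add_pw (M : ValuatedMatroid E r) (w : E → ℝ) (A B : Finset E) :
    M.pw w A + M.pw w B =
      M.p A + M.p B + ((-(∑ x ∈ A, w x + ∑ x ∈ B, w x) : ℝ) : WithTop ℝ) := by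
  rw [pw, pw, add_add_add_comm, ← WithTop.coe_add, neg_add]

lemma pw_exchange (hA : A.card = r) (hB : B.card = r) (ha : a ∈ A) (haB : a ∉ B) :
    ∃ b ∈ B, b ∉ A ∧
      M.pw w (insert b (A.erase a)) + M.pw w (insert a (B.erase b)) ≤ M.pw w A + M.pw w B := by
  obtain ⟨b, hb, hle⟩ := M.exchange A B hA hB a (Finset.mem_sdiff.2 ⟨ha, haB⟩)
  obtain ⟨hbB, hbA⟩ := Finset.mem_sdiff.1 hb
  refine ⟨b, hbB, hbA, ?_⟩
  rw [pw_add_pw, pw_add_pw, sum_exchange w ha haB hbB hbA]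
  exact add_le_add_left hle _

lemma le_and_le_of_add_le_add {m s t : WithTop ℝ} (hm : m ≠ ⊤) (hs : m ≤ s) (ht : m ≤ t)
    (h : s + t ≤ m + m) : s ≤ m ∧ t ≤ m :=
  ⟨(WithTop.add_le_add_iff_right hm).1 ((add_le_add_right ht s).trans h),
    (WithTop.add_le_add_iff_left hm).1 ((add_le_add_left hs t).trans h)⟩

lemma IsInitBasis.exchange (hA : M.IsInitBasis w A) (hB : M.IsInitBasis w B) (ha : a ∈ A)
    (haB : a ∉ B) :
    ∃ b ∈ B, b ∉ A ∧ M.IsInitBasis w (insert b (A.erase a)) ∧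
      M.IsInitBasis w (insert a (B.erase b)) := by
  obtain ⟨b, hbB, hbA, hle⟩ := pw_exchange (w := w) hA.1 hB.1 ha haB
  rw [hA.2, hB.2] at hle
  obtain ⟨hA', hB'⟩ := le_and_le_of_add_le_add (M.minVal_ne_top w) (M.minVal_le w _)
    (M.minVal_le w _) hle
  exact ⟨b, hbB, hbA, isInitBasis_of_pw_le hA', isInitBasis_of_pw_le hB'⟩

lemma p_insert_eq_top (hB : M.p B ≠ ⊤) (he : e ∉ B) : M.p (insert e B) = ⊤ := by
  by_contra h
  have := M.card_of_ne_top _ h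
  rw [Finset.card_insert_of_notMem he, M.card_of_ne_top B hB] at this
  omega

lemma exists_fundCircuit_add_eq_pw (hB : M.p B ≠ ⊤) (he : e ∉ B) :
    ∃ c : ℝ, ∀ x, M.fundCircuit B e x + w x = M.pw w ((insert e B).erase x) + c := by
  obtain ⟨pB, hpB⟩ := WithTop.ne_top_iff_exists.1 hB
  refine ⟨∑ y ∈ B, w y + w e - pB, fun x => ?_⟩
  by_cases hx : x ∈ insert e B
  · have hsum : ∑ y ∈ (insert e B).erase x, w y = ∑ y ∈ B, w y + w e - w x := by
      have := Finset.sum_erase_add (insert e B) w hx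
      rw [Finset.sum_insert he] at this
      linarith
    rw [fundCircuit, pw, hsum, ← hpB, WithTop.untopD_coe, add_assoc, add_assoc,
      ← WithTop.coe_add, ← WithTop.coe_add]
    congr 2
    ring
  · simp [fundCircuit, pw, Finset.erase_eq_of_notMem hx, p_insert_eq_top hB he]

lemma initSet_fundCircuit (hB : M.IsInitBasis w B) (he : e ∉ B) :
    initSet (M.fundCircuit B e) w = {x | M.IsInitBasis w ((insert e B).erase x)} := by
  obtain ⟨c, hc⟩ := exists_fundCircuit_add_eq_pw (w := w) hB.p_ne_top he
  rw [initSet_eq_of_add_eq c hc]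
  ext x
  refine ⟨fun hx => isInitBasis_of_pw_le ?_, fun hx y => hx.2 ▸ M.minVal_le w _⟩
  simpa [Finset.erase_insert he, hB.2] using hx e

lemma notMem_of_erase_subset (hC : ¬ M.IsInitIndep w C) (hB : M.IsInitBasis w B)
    (h : C.erase x ⊆ B) : x ∉ B :=
  fun hx => hC ⟨B, hB, (Finset.erase_subset_iff_of_mem hx).1 h⟩

section Circuit

variable (hC : ¬ M.IsInitIndep w C)
  (hmin : ∀ C' : Finset E, C' ⊆ C → C' ≠ C → M.IsInitIndep w C')
include hC hmin

lemma exists_isInitBasis_erase_subset (hx : x ∈ C) :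
    ∃ B, M.IsInitBasis w B ∧ C.erase x ⊆ B ∧ x ∉ B := by
  obtain ⟨B, hB, hCB⟩ := hmin _ (C.erase_subset x) (C.erase_ssubset hx).ne
  exact ⟨B, hB, hCB, notMem_of_erase_subset hC hB hCB⟩

lemma isInitBasis_insert_erase (hB : M.IsInitBasis w B) (hCB : C.erase e ⊆ B) (hx : x ∈ C) :
    M.IsInitBasis w ((insert e B).erase x) := by
  rcases eq_or_ne x e with rfl | hxe
  · rwa [Finset.erase_insert (notMem_of_erase_subset hC hB hCB)]
  obtain ⟨B', hB', hCB', hxB'⟩ := exists_isInitBasis_erase_subset hC hmin hx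
  obtain ⟨b, -, hbB, hBx, hB'x⟩ :=
    hB.exchange hB' (hCB (Finset.mem_erase.2 ⟨hxe, hx⟩)) hxB'
  have hbC : b ∈ C := by
    by_contra hbC
    refine hC ⟨_, hB'x, Finset.subset_insert_iff.2 (Finset.subset_erase.2 ⟨hCB', ?_⟩)⟩
    exact fun hb => hbC (Finset.mem_of_mem_erase hb)
  obtain rfl : b = e := by
    by_contra hbe
    exact hbB (hCB (Finset.mem_erase.2 ⟨hbe, hbC⟩))
  rwa [Finset.erase_insert_of_ne hxe.symm]

/-- A circuit of `in_w(M)` is the fundamental circuit of any of its elements `e` over an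
initial basis containing the rest of the circuit. -/
lemma eq_setOf_isInitBasis_insert_erase (hB : M.IsInitBasis w B) (hCB : C.erase e ⊆ B) :
    (C : Set E) = {x | M.IsInitBasis w ((insert e B).erase x)} := by
  refine Set.Subset.antisymm (fun x hx => isInitBasis_insert_erase hC hmin hB hCB hx)
    fun x hx => ?_
  by_contra hxC
  exact hC ⟨_, hx, Finset.subset_erase.2 ⟨Finset.subset_insert_iff.2 hCB, hxC⟩⟩

end Circuit

end ValuatedMatroid

open ValuatedMatroid

/-- **Circuits of the initial matroid are initial sets of valuated circuits.**  Every
circuit `C` of the initial matroid `in_w(M)` (a minimal set contained in no basis of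
`in_w(M)`) has the form `C = in_w(H) = argmin_e (H_e + w_e)` for some valuated circuit
`H` of `M`. -/
theorem circuit_initMatroid_eq_initSet {E : Type*} [DecidableEq E] [Fintype E] {r : ℕ}
    (M : ValuatedMatroid E r) (w : E → ℝ) (C : Finset E)
    (hdep : ¬ ∃ B : Finset E, M.IsInitBasis w B ∧ C ⊆ B)
    (hmin : ∀ C' : Finset E, C' ⊆ C → C' ≠ C → ∃ B : Finset E, M.IsInitBasis w B ∧ C' ⊆ B) :
    ∃ H : E → WithTop ℝ, M.IsValuatedCircuit H ∧ (C : Set E) = initSet H w := by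
  obtain ⟨e, he⟩ : C.Nonempty := by
    rw [Finset.nonempty_iff_ne_empty]
    rintro rfl
    obtain ⟨B, hB⟩ := M.exists_isInitBasis w
    exact hdep ⟨B, hB, Finset.empty_subset B⟩
  obtain ⟨B, hB, hCB, heB⟩ := exists_isInitBasis_erase_subset hdep hmin he
  refine ⟨M.fundCircuit B e, ⟨B, e, 0, hB.p_ne_top, heB, fun x => by simp⟩, ?_⟩
  rw [initSet_fundCircuit hB heB]
  exact eq_setOf_isInitBasis_insert_erase hdep hmin hB hCB
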